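/- arXiv:1111.5167 — 3 statements merged into one kernel-verified Lean document; each statement's English description precedes it below -/
import Mathlib

section
/- Let p ∈ P_j(r2) be nonzero. If p has two distinct zeroes λ₁ ≠ λ₂ with |λ₁| = |λ₂|, then every λ ∈ ℂ with |λ| = |λ₁| is a zero of p. -/
/-!
Writing `p(λ) = a(|λ|) + b(|λ|) λ`, where `a` and `b` depend only on the modulus, `p` restricted
to a circle is an affine function of `λ`. An affine function with two distinct zeros has both
coefficients zero, so it vanishes on the whole circle.
-/

/-- Evaluation of the polyanalytic polynomial in `P_j(r2)` with coefficients `α`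
(supported in `{0,…,j}`):  `p(λ) = ∑_{k=0}^{⌊j/2⌋} (α_{2k} + α_{2k+1} λ)|λ|^{2k}`. -/
noncomputable def evalR2 (j : ℕ) (α : ℕ → ℂ) (z : ℂ) : ℂ :=
  ∑ k ∈ Finset.range (j / 2 + 1), (α (2 * k) + α (2 * k + 1) * z) * ((‖z‖ : ℂ)) ^ (2 * k)

open Finset

theorem eq_zero_and_eq_zero_of_add_mul_eq_zero {R : Type*} [CommRing R] [NoZeroDivisors R]
    {a b x y : R} (hxy : x ≠ y) (hx : a + b * x = 0) (hy : a + b * y = 0) :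
    a = 0 ∧ b = 0 := by
  have hb : b = 0 := by
    have : b * (x - y) = 0 := by linear_combination hx - hy
    exact (mul_eq_zero.mp this).resolve_right (sub_ne_zero.mpr hxy)
  exact ⟨by simpa [hb] using hx, hb⟩

namespace evalR2

noncomputable def constCoeff (j : ℕ) (α : ℕ → ℂ) (r : ℝ) : ℂ :=
  ∑ k ∈ range (j / 2 + 1), α (2 * k) * (r : ℂ) ^ (2 * k)

noncomputable def linCoeff (j : ℕ) (α : ℕ → ℂ) (r : ℝ) : ℂ :=
  ∑ k ∈ range (j / 2 + 1), α (2 * k + 1) * (r : ℂ) ^ (2 * k)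

theorem eq_constCoeff_add_linCoeff_mul (j : ℕ) (α : ℕ → ℂ) (z : ℂ) :
    evalR2 j α z = constCoeff j α ‖z‖ + linCoeff j α ‖z‖ * z := by
  rw [evalR2, constCoeff, linCoeff, sum_mul, ← sum_add_distrib]
  exact sum_congr rfl fun k _ => by ring

end evalR2

theorem zeros_full_circle_general (j : ℕ) (α : ℕ → ℂ)
    (l₁ l₂ : ℂ) (hne : l₁ ≠ l₂) (habs : ‖l₁‖ = ‖l₂‖)
    (h₁ : evalR2 j α l₁ = 0) (h₂ : evalR2 j α l₂ = 0) :
    ∀ l : ℂ, ‖l‖ = ‖l₁‖ → evalR2 j α l = 0 := by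
  intro l hl
  rw [evalR2.eq_constCoeff_add_linCoeff_mul] at h₁ h₂ ⊢
  rw [← habs] at h₂
  obtain ⟨hconst, hlin⟩ := eq_zero_and_eq_zero_of_add_mul_eq_zero hne h₁ h₂
  rw [hl, hconst, hlin, zero_mul, add_zero]

/-- If a nonzero `p ∈ P_j(r2)` has two distinct zeroes of the same modulus, then every
number of that modulus is a zero of `p`. -/
theorem zeros_full_circle (j : ℕ) (α : ℕ → ℂ) (hsupp : ∀ k, j < k → α k = 0)
    (hp : ∃ z, evalR2 j α z ≠ 0)
    (l₁ l₂ : ℂ) (hne : l₁ ≠ l₂) (habs : ‖l₁‖ = ‖l₂‖)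
    (h₁ : evalR2 j α l₁ = 0) (h₂ : evalR2 j α l₂ = 0) :
    ∀ l : ℂ, ‖l‖ = ‖l₁‖ → evalR2 j α l = 0 :=
  zeros_full_circle_general j α l₁ l₂ hne habs h₁ h₂
end

section
/- Let γ ⊂ ℂ be a compact simple curve, either open (the image of an injective continuous map from [0,1]) or closed (the image of an injective continuous map from the unit circle), such that γ intersects every circle centred at the origin in at most two points. Let f : γ → ℂ be continuous and let ε > 0. Then there exists a polynomial p ∈ P(r2) such that max over z ∈ γ of |f(z) − p(z)| < ε. -/
open Set Topology Polynomial

lemma exists_eq_add_mul_of_encard_le_two {K : Type*} [Field K] {s : Set K}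
    (hs : s.encard ≤ 2) (f : K → K) : ∃ a b : K, ∀ z ∈ s, f z = a + b * z := by
  rcases le_or_gt s.encard 1 with h1 | h1
  · obtain rfl | ⟨x, rfl⟩ := encard_le_one_iff_eq.1 h1
    · exact ⟨0, 0, by simp⟩
    · exact ⟨f x, 0, by simp⟩
  · obtain ⟨x, y, hxy, rfl⟩ := encard_eq_two.1 (le_antisymm hs (Order.add_one_le_of_lt h1))
    have hyx : y - x ≠ 0 := sub_ne_zero.2 hxy.symm
    refine ⟨f x - (f y - f x) / (y - x) * x, (f y - f x) / (y - x), ?_⟩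
    rintro z (rfl | rfl)
    · ring
    · field_simp
      ring

lemma IsCompact.eventually_forall_fiber_mem {X Y Z : Type*} [TopologicalSpace X] [T2Space X]
    [TopologicalSpace Y] [T2Space Y] [TopologicalSpace Z] {K : Set X} (hK : IsCompact K)
    {φ : X → Y} (hφ : ContinuousOn φ K) {g : X → Z} (hg : ContinuousOn g K) {U : Set Z}
    (hU : IsOpen U) {y : Y} (h : ∀ x ∈ K, φ x = y → g x ∈ U) :
    ∀ᶠ y' in 𝓝 y, ∀ x ∈ K, φ x = y' → g x ∈ U := by
  set B := K ∩ g ⁻¹' Uᶜ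
  have hB : IsCompact (φ '' B) :=
    (hK.of_isClosed_subset (hg.preimage_isClosed_of_isClosed hK.isClosed hU.isClosed_compl)
      inter_subset_left).image_of_continuousOn (hφ.mono inter_subset_left)
  have hy : y ∉ φ '' B := by
    rintro ⟨x, ⟨hxK, hxU⟩, rfl⟩
    exact hxU (h x hxK rfl)
  filter_upwards [hB.isClosed.isOpen_compl.mem_nhds hy] with y' hy' x hxK rfl
  by_contra hxU
  exact hy' ⟨x, ⟨hxK, hxU⟩, rfl⟩

lemma exists_continuous_affine_near {γ : Set ℂ} (hγ : IsCompact γ)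
    (hcirc : ∀ r : ℝ, ({z ∈ γ | ‖z‖ = r}).encard ≤ 2) {f : ℂ → ℂ} (hf : ContinuousOn f γ)
    {ε : ℝ} (hε : 0 < ε) :
    ∃ G H : ℝ → ℂ, Continuous G ∧ Continuous H ∧
      ∀ z ∈ γ, ‖f z - (G ‖z‖ + H ‖z‖ * z)‖ < ε := by
  let t : ℝ → Set (ℂ × ℂ) := fun r => {p | ∀ z ∈ γ, ‖z‖ = r → ‖f z - (p.1 + p.2 * z)‖ < ε}
  have ht : ∀ r, Convex ℝ (t r) := by
    intro r
    simp only [t, ofPred_forall]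
    refine convex_iInter₂ fun z _ => convex_iInter fun _ => ?_
    have hL : IsLinearMap ℝ fun p : ℂ × ℂ => p.1 + p.2 * z :=
      ⟨fun p q => by simp only [Prod.fst_add, Prod.snd_add]; ring,
        fun c p => by simp only [Prod.smul_fst, Prod.smul_snd, Complex.real_smul]; ring⟩
    have hball : {p : ℂ × ℂ | ‖f z - (p.1 + p.2 * z)‖ < ε} =
        (fun p => p.1 + p.2 * z) ⁻¹' Metric.ball (f z) ε := by
      ext p
      simp [dist_eq_norm, norm_sub_rev]
    exact hball ▸ (convex_ball (f z) ε).is_linear_preimage hL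
  have hloc : ∀ r, ∃ p : ℂ × ℂ, ∀ᶠ s in 𝓝 r, p ∈ t s := by
    intro r
    obtain ⟨a, b, hab⟩ := exists_eq_add_mul_of_encard_le_two (hcirc r) f
    refine ⟨(a, b), hγ.eventually_forall_fiber_mem (g := fun z => ‖f z - (a + b * z)‖)
      continuous_norm.continuousOn (by fun_prop) isOpen_Iio fun z hz hzr => ?_⟩
    simpa [hab z ⟨hz, hzr⟩] using hε
  obtain ⟨g, hg⟩ := exists_continuous_forall_mem_convex_of_local_const ht hloc
  exact ⟨fun r => (g r).1, fun r => (g r).2, g.continuous.fst, g.continuous.snd,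
    fun z hz => hg ‖z‖ z hz rfl⟩

lemma exists_complex_polynomial_near_of_continuousOn (a b : ℝ) (F : ℝ → ℂ)
    (hF : ContinuousOn F (Icc a b)) (ε : ℝ) (hε : 0 < ε) :
    ∃ P : ℂ[X], ∀ t ∈ Icc a b, ‖F t - P.eval (t : ℂ)‖ < ε := by
  obtain ⟨P₁, hP₁⟩ := exists_polynomial_near_of_continuousOn a b (fun t => (F t).re)
    (Complex.continuous_re.comp_continuousOn hF) (ε / 2) (half_pos hε)
  obtain ⟨P₂, hP₂⟩ := exists_polynomial_near_of_continuousOn a b (fun t => (F t).im)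
    (Complex.continuous_im.comp_continuousOn hF) (ε / 2) (half_pos hε)
  set P : ℂ[X] := P₁.map Complex.ofRealHom + C Complex.I * P₂.map Complex.ofRealHom
  refine ⟨P, fun t ht => ?_⟩
  have hmap : ∀ p : ℝ[X], (p.map Complex.ofRealHom).eval (t : ℂ) = p.eval t := fun _ =>
    (eval_map _ _).trans (eval₂_at_apply _ _)
  have hre : (F t - P.eval (t : ℂ)).re = (F t).re - P₁.eval t := by
    simp [P, hmap]
  have him : (F t - P.eval (t : ℂ)).im = (F t).im - P₂.eval t := by
    simp [P, hmap]
  calc _ ≤ |(F t).re - P₁.eval t| + |(F t).im - P₂.eval t| :=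
        hre ▸ him ▸ Complex.norm_le_abs_re_add_abs_im _
    _ < ε / 2 + ε / 2 := by
        rw [abs_sub_comm, abs_sub_comm (F t).im]
        exact add_lt_add (hP₁ t ht) (hP₂ t ht)
    _ = ε := add_halves ε

lemma exists_polynomial_sq_near {G : ℝ → ℂ} (hG : Continuous G) (R : ℝ) {ε : ℝ} (hε : 0 < ε) :
    ∃ P : ℂ[X], ∀ r ∈ Icc 0 R, ‖G r - P.eval ((r : ℂ) ^ 2)‖ < ε := by
  obtain ⟨P, hP⟩ := exists_complex_polynomial_near_of_continuousOn 0 (R ^ 2) (G ∘ Real.sqrt)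
    (hG.comp Real.continuous_sqrt).continuousOn ε hε
  refine ⟨P, fun r ⟨hr0, hrR⟩ => ?_⟩
  have hr2 : r ^ 2 ∈ Icc 0 (R ^ 2) := ⟨sq_nonneg r, pow_le_pow_left₀ hr0 hrR 2⟩
  simpa [Real.sqrt_sq hr0] using hP (r ^ 2) hr2

lemma IsCompact.exists_polynomial_radial_near {K : Set ℂ} (hK : IsCompact K) {G H : ℝ → ℂ}
    (hG : Continuous G) (hH : Continuous H) {ε : ℝ} (hε : 0 < ε) :
    ∃ P Q : ℂ[X], ∀ z ∈ K, ‖G ‖z‖ + H ‖z‖ * z -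
      (P.eval ((‖z‖ : ℂ) ^ 2) + z * Q.eval ((‖z‖ : ℂ) ^ 2))‖ < ε := by
  obtain ⟨R, hR, hKR⟩ := hK.isBounded.subset_closedBall_lt 0 0
  obtain ⟨P, hP⟩ := exists_polynomial_sq_near hG R (half_pos hε)
  obtain ⟨Q, hQ⟩ := exists_polynomial_sq_near hH R (div_pos hε (mul_pos two_pos hR))
  refine ⟨P, Q, fun z hz => ?_⟩
  have hzR : ‖z‖ ∈ Icc 0 R := ⟨norm_nonneg z, mem_closedBall_zero_iff.1 (hKR hz)⟩
  calc _ = ‖(G ‖z‖ - P.eval ((‖z‖ : ℂ) ^ 2)) + z * (H ‖z‖ - Q.eval ((‖z‖ : ℂ) ^ 2))‖ := by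
        ring_nf
    _ ≤ ‖G ‖z‖ - P.eval ((‖z‖ : ℂ) ^ 2)‖ + R * ‖H ‖z‖ - Q.eval ((‖z‖ : ℂ) ^ 2)‖ := by
        grw [norm_add_le, norm_mul, hzR.2]
    _ < ε / 2 + R * (ε / (2 * R)) := by
        gcongr
        exacts [hP _ hzR, hQ _ hzR]
    _ = ε := by field_simp; ring

def interleaveCoeff {R : Type*} [Semiring R] (P Q : R[X]) (m : ℕ) : R :=
  if Even m then P.coeff (m / 2) else Q.coeff (m / 2)

lemma interleaveCoeff_eq_zero {R : Type*} [Semiring R] {P Q : R[X]} {n m : ℕ}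
    (hP : P.natDegree ≤ n) (hQ : Q.natDegree ≤ n) (hm : 2 * n + 1 < m) :
    interleaveCoeff P Q m = 0 := by
  unfold interleaveCoeff
  split_ifs <;> exact coeff_eq_zero_of_natDegree_lt (by omega)

lemma evalR2_interleaveCoeff {P Q : ℂ[X]} {n : ℕ} (hP : P.natDegree ≤ n) (hQ : Q.natDegree ≤ n)
    (z : ℂ) : evalR2 (2 * n + 1) (interleaveCoeff P Q) z =
      P.eval ((‖z‖ : ℂ) ^ 2) + z * Q.eval ((‖z‖ : ℂ) ^ 2) := by
  have hn : (2 * n + 1) / 2 = n := by omega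
  rw [evalR2, hn, eval_eq_sum_range' (Nat.lt_succ_of_le hP),
    eval_eq_sum_range' (Nat.lt_succ_of_le hQ), Finset.mul_sum, ← Finset.sum_add_distrib]
  refine Finset.sum_congr rfl fun k _ => ?_
  have h2k : interleaveCoeff P Q (2 * k) = P.coeff k := by simp [interleaveCoeff]
  have h2k1 : interleaveCoeff P Q (2 * k + 1) = Q.coeff k := by
    simp [interleaveCoeff, Nat.add_div_of_dvd_right (dvd_mul_right 2 k)]
  rw [h2k, h2k1, pow_mul]
  ring

/-- Weierstrass-type approximation: on a compact simple (open or closed) curve `γ`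
intersecting every origin-centred circle in at most two points, every continuous
function can be uniformly approximated by elements of `P(r2) = ⋃_j P_j(r2)`. -/
theorem weierstrass_r2 (γ : Set ℂ)
    (hγ : (∃ f : ℝ → ℂ, ContinuousOn f (Set.Icc 0 1) ∧ Set.InjOn f (Set.Icc 0 1) ∧
            γ = f '' Set.Icc 0 1) ∨
          (∃ f : ℂ → ℂ, ContinuousOn f (Metric.sphere (0 : ℂ) 1) ∧
            Set.InjOn f (Metric.sphere (0 : ℂ) 1) ∧ γ = f '' Metric.sphere (0 : ℂ) 1))
    (hcirc : ∀ r : ℝ, ({z ∈ γ | ‖z‖ = r}).encard ≤ 2)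
    (f : ℂ → ℂ) (hf : ContinuousOn f γ) (ε : ℝ) (hε : 0 < ε) :
    ∃ (j : ℕ) (α : ℕ → ℂ), (∀ k, j < k → α k = 0) ∧
      ∀ z ∈ γ, ‖f z - evalR2 j α z‖ < ε := by
  have hγc : IsCompact γ := by
    rcases hγ with ⟨g, hg, -, rfl⟩ | ⟨g, hg, -, rfl⟩
    · exact isCompact_Icc.image_of_continuousOn hg
    · exact (isCompact_sphere 0 1).image_of_continuousOn hg
  obtain ⟨G, H, hG, hH, hfGH⟩ := exists_continuous_affine_near hγc hcirc hf (half_pos hε)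
  obtain ⟨P, Q, hPQ⟩ := hγc.exists_polynomial_radial_near hG hH (half_pos hε)
  have hP : P.natDegree ≤ max P.natDegree Q.natDegree := le_max_left _ _
  have hQ : Q.natDegree ≤ max P.natDegree Q.natDegree := le_max_right _ _
  refine ⟨_, interleaveCoeff P Q, fun k hk => interleaveCoeff_eq_zero hP hQ hk, fun z hz => ?_⟩
  rw [evalR2_interleaveCoeff hP hQ]
  calc _ ≤ _ := norm_sub_le_norm_sub_add_norm_sub _ (G ‖z‖ + H ‖z‖ * z) _
    _ < ε / 2 + ε / 2 := add_lt_add (hfGH z hz) (hPQ z hz)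
    _ = ε := add_halves ε
end

section
/- Let D ∈ ℂ^{n×n} be a diagonal matrix with diagonal entries λ₁, …, λ_n and let r ∈ ℝ^n. For a polynomial p ∈ P_j(r2) with coefficients α_k, define the vector p(Dτ)r = Σ_{k=0}^{⌊j/2⌋} (α_{2k} I + α_{2k+1} D)(D D̄)^k r, where D̄ is the entrywise conjugate of D. Then for all p, q ∈ P_j(r2), the standard Euclidean inner product satisfies ⟨p(Dτ)r, q(Dτ)r⟩ = Σ_{k=1}^n p(λ_k) · conj(q(λ_k)) · r_k². -/
/-- The vector `p(Dτ)r = ∑_{k=0}^{⌊j/2⌋} (α_{2k} I + α_{2k+1} D)(D D̄)^k r`. -/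
noncomputable def polyApply {n : ℕ} (j : ℕ) (α : ℕ → ℂ)
    (D : Matrix (Fin n) (Fin n) ℂ) (r : Fin n → ℝ) : Fin n → ℂ :=
  (∑ k ∈ Finset.range (j / 2 + 1),
      (α (2 * k) • (1 : Matrix (Fin n) (Fin n) ℂ) + α (2 * k + 1) • D) *
        (D * D.map (starRingEnd ℂ)) ^ k).mulVec fun i => (r i : ℂ)

open Matrix Finset

lemma Complex.mul_conj_pow (z : ℂ) (k : ℕ) :
    (z * starRingEnd ℂ z) ^ k = (‖z‖ : ℂ) ^ (2 * k) := by
  rw [Complex.mul_conj', pow_mul]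

lemma Matrix.diagonal_finsetSum {ι m R : Type*} [DecidableEq m] [AddCommMonoid R]
    (s : Finset ι) (d : ι → m → R) :
    diagonal (∑ k ∈ s, d k) = ∑ k ∈ s, diagonal (d k) :=
  map_sum (diagonalAddMonoidHom m R) d s

lemma polyApply_diagonal {n : ℕ} (j : ℕ) (α : ℕ → ℂ) (lam : Fin n → ℂ) (r : Fin n → ℝ) :
    polyApply j α (diagonal lam) r = fun i => evalR2 j α (lam i) * r i := by
  have hconj : (diagonal lam).map (starRingEnd ℂ) = diagonal fun i => starRingEnd ℂ (lam i) :=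
    diagonal_map (map_zero _)
  have hsum : ∑ k ∈ range (j / 2 + 1),
      (α (2 * k) • (1 : Matrix (Fin n) (Fin n) ℂ) + α (2 * k + 1) • diagonal lam) *
        (diagonal lam * (diagonal lam).map (starRingEnd ℂ)) ^ k =
      diagonal fun i => evalR2 j α (lam i) := by
    simp only [hconj, diagonal_mul_diagonal, diagonal_pow, ← diagonal_one, ← diagonal_smul,
      diagonal_add, ← diagonal_finsetSum]
    congr 1
    ext i
    simp [evalR2, Complex.mul_conj_pow]
  ext i
  rw [polyApply, hsum, mulVec_diagonal]

theorem inner_polyApply_general {n : ℕ} (j : ℕ) (lam : Fin n → ℂ) (r : Fin n → ℝ)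
    (α β : ℕ → ℂ) :
    ∑ i, polyApply j α (Matrix.diagonal lam) r i *
        (starRingEnd ℂ) (polyApply j β (Matrix.diagonal lam) r i) =
      ∑ i, evalR2 j α (lam i) * (starRingEnd ℂ) (evalR2 j β (lam i)) * ((r i : ℂ)) ^ 2 := by
  simp only [polyApply_diagonal, map_mul, Complex.conj_ofReal]
  exact Finset.sum_congr rfl fun i _ => by ring

/-- For a diagonal `D` with diagonal entries `λ_1, …, λ_n` and a real vector `r`,
`⟨p(Dτ)r, q(Dτ)r⟩ = ∑_k p(λ_k) conj(q(λ_k)) r_k²` for all `p, q ∈ P_j(r2)`. -/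
theorem inner_polyApply {n : ℕ} (j : ℕ) (lam : Fin n → ℂ) (r : Fin n → ℝ)
    (α β : ℕ → ℂ) (hα : ∀ k, j < k → α k = 0) (hβ : ∀ k, j < k → β k = 0) :
    ∑ i, polyApply j α (Matrix.diagonal lam) r i *
        (starRingEnd ℂ) (polyApply j β (Matrix.diagonal lam) r i) =
      ∑ i, evalR2 j α (lam i) * (starRingEnd ℂ) (evalR2 j β (lam i)) * ((r i : ℂ)) ^ 2 :=
  inner_polyApply_general j lam r α β
end
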